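/- Let s ∈ (0,1) and n ≥ 2 an integer. There exists a constant C₁ > 0 depending only on n and s such that for every x ∈ B₁(0), ∫_{B₁(0)^c} |x − y|^{−(n+2s)} dy ≥ C₁ · (1 − |x|)^{−2s}, where the integral is with respect to Lebesgue measure on ℝⁿ. -/

import Mathlib

open MeasureTheory Metric Set Filter

/-!
Let `d = 1 - ‖x‖`. The ball of radius `d` centred at distance `2d` from `x`, on the ray from the
origin through `x`, lies outside the unit ball and within distance `3d` of `x`. There the kernel is
at least `(3d)^(-(n+2s))`, and the ball has volume `d^n` times that of the unit ball, which gives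
`3^(-(n+2s)) |B₁| d^(-2s)`. The kernel is integrable on the exterior because the exterior stays at
distance `d` from `x`, where it is dominated by a multiple of `(1 + ‖y - x‖)^(-(n+2s))`.
-/

noncomputable section

open Module

section

variable {E : Type*} [NormedAddCommGroup E] [NormedSpace ℝ E]

theorem exists_dist_eq_and_norm_eq_add [Nontrivial E] (x : E) {t : ℝ} (ht : 0 ≤ t) :
    ∃ c : E, dist x c = t ∧ ‖c‖ = ‖x‖ + t := by
  obtain ⟨u, hu, hxu⟩ : ∃ u : E, ‖u‖ = 1 ∧ SameRay ℝ x u := by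
    rcases eq_or_ne x 0 with rfl | hx
    · obtain ⟨u, hu⟩ := exists_norm_eq E zero_le_one
      exact ⟨u, hu, SameRay.zero_left u⟩
    · exact ⟨‖x‖⁻¹ • x, norm_smul_inv_norm hx, SameRay.sameRay_pos_smul_right x (by positivity)⟩
  refine ⟨x + t • u, ?_, ?_⟩
  · simp [dist_eq_norm, norm_smul, hu, abs_of_nonneg ht]
  · rw [(hxu.nonneg_smul_right ht).norm_add, norm_smul, hu, Real.norm_of_nonneg ht, mul_one]

theorem exists_ball_subset_compl_ball_inter_ball [Nontrivial E] {x : E} {R : ℝ}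
    (hx : ‖x‖ < R) :
    ∃ c : E, ball c (R - ‖x‖) ⊆ (ball 0 R)ᶜ ∩ ball x (3 * (R - ‖x‖)) := by
  obtain ⟨c, hxc, hc⟩ := exists_dist_eq_and_norm_eq_add x (t := 2 * (R - ‖x‖)) (by linarith)
  refine ⟨c, subset_inter ?_ (ball_subset_ball' ?_)⟩
  · refine (ball_disjoint_ball ?_).subset_compl_right
    rw [dist_zero_right, hc]
    linarith
  · rw [dist_comm, hxc]
    linarith

theorem rpow_neg_le_one_add_inv_rpow_mul_one_add_rpow_neg {ε a r : ℝ} (hε : 0 < ε)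
    (hεa : ε ≤ a) (hr : 0 ≤ r) :
    a ^ (-r) ≤ (1 + ε⁻¹) ^ r * (1 + a) ^ (-r) := by
  have ha : 0 < a := hε.trans_le hεa
  have hle : 1 + a ≤ (1 + ε⁻¹) * a := by
    have : 1 ≤ a / ε := (one_le_div hε).2 hεa
    rw [add_mul, one_mul, inv_mul_eq_div]
    linarith
  calc a ^ (-r) = (1 + ε⁻¹) ^ r * ((1 + ε⁻¹) * a) ^ (-r) := by
        rw [Real.mul_rpow (by positivity) ha.le, ← mul_assoc, ← Real.rpow_add (by positivity),
          add_neg_cancel, Real.rpow_zero, one_mul]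
    _ ≤ (1 + ε⁻¹) ^ r * (1 + a) ^ (-r) :=
        mul_le_mul_of_nonneg_left
          (Real.rpow_le_rpow_of_nonpos (by positivity) hle (by linarith)) (by positivity)

variable [MeasurableSpace E] [BorelSpace E] [FiniteDimensional ℝ E]
  (μ : Measure E) [μ.IsAddHaarMeasure]

theorem integrableOn_compl_ball_dist_rpow_neg {r : ℝ} (hr : (finrank ℝ E : ℝ) < r) (x : E)
    {ε : ℝ} (hε : 0 < ε) :
    IntegrableOn (fun y ↦ dist x y ^ (-r)) (ball x ε)ᶜ μ := by
  have hr₀ : 0 ≤ r := (Nat.cast_nonneg _).trans hr.le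
  have hbound : Integrable (fun y ↦ (1 + ε⁻¹) ^ r * (1 + ‖y - x‖) ^ (-r)) μ :=
    ((integrable_one_add_norm hr).comp_sub_right x).const_mul _
  refine hbound.integrableOn.mono'
    ((measurable_const.dist measurable_id).pow_const _).aestronglyMeasurable ?_
  filter_upwards [ae_restrict_mem measurableSet_ball.compl] with y hy
  have hεy : ε ≤ dist x y := by simpa [dist_comm] using hy
  rw [Real.norm_of_nonneg (by positivity), ← dist_eq_norm, dist_comm y x]
  exact rpow_neg_le_one_add_inv_rpow_mul_one_add_rpow_neg hε hεy hr₀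

theorem le_integral_compl_ball_dist_rpow_neg [Nontrivial E] {r : ℝ}
    (hr : (finrank ℝ E : ℝ) < r) {x : E} {R : ℝ} (hx : ‖x‖ < R) :
    3 ^ (-r) * μ.real (ball 0 1) * (R - ‖x‖) ^ ((finrank ℝ E : ℝ) - r) ≤
      ∫ y in (ball 0 R)ᶜ, dist x y ^ (-r) ∂μ := by
  set d := R - ‖x‖
  have hd : 0 < d := sub_pos.2 hx
  obtain ⟨c, hc⟩ := exists_ball_subset_compl_ball_inter_ball hx
  have hcompl : (ball (0 : E) R)ᶜ ⊆ (ball x d)ᶜ :=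
    compl_subset_compl.2 (ball_subset_ball' (by rw [dist_zero_right]; linarith))
  have hint : IntegrableOn (fun y ↦ dist x y ^ (-r)) (ball 0 R)ᶜ μ :=
    (integrableOn_compl_ball_dist_rpow_neg μ hr x hd).mono_set hcompl
  have hlow : ∀ y ∈ ball c d, (3 * d) ^ (-r) ≤ dist x y ^ (-r) := fun y hy ↦ by
    have hdy : d ≤ dist x y := by simpa [dist_comm] using hcompl (hc hy).1
    refine Real.rpow_le_rpow_of_nonpos (hd.trans_le hdy) ?_ (by linarith [hr])
    simpa [dist_comm] using (mem_ball.1 (hc hy).2).le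
  have hvol : μ.real (ball c d) = d ^ finrank ℝ E * μ.real (ball 0 1) := by
    simp only [measureReal_def, Measure.addHaar_ball_of_pos μ c hd, ENNReal.toReal_mul,
      ENNReal.toReal_ofReal (by positivity : 0 ≤ d ^ finrank ℝ E)]
  calc 3 ^ (-r) * μ.real (ball 0 1) * d ^ ((finrank ℝ E : ℝ) - r)
      = (3 * d) ^ (-r) * μ.real (ball c d) := by
        rw [hvol, Real.mul_rpow (by norm_num) hd.le, sub_eq_neg_add, Real.rpow_add hd,
          Real.rpow_natCast]
        ring
    _ ≤ ∫ y in ball c d, dist x y ^ (-r) ∂μ :=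
        setIntegral_ge_of_const_le_real measurableSet_ball measure_ball_lt_top.ne hlow
          (hint.mono_set fun y hy ↦ (hc hy).1)
    _ ≤ ∫ y in (ball 0 R)ᶜ, dist x y ^ (-r) ∂μ :=
        setIntegral_mono_set hint (Eventually.of_forall fun y ↦ by positivity)
          (Eventually.of_forall fun y hy ↦ (hc hy).1)

end

/-- boundary estimate (2.34): the exterior integral of the
fractional kernel blows up like the inverse `2s`-power of the boundary distance. -/
theorem exterior_kernel_integral_lower_bound
    (n : ℕ) (hn : 2 ≤ n) (s : ℝ) (hs : s ∈ Set.Ioo (0 : ℝ) 1) :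
    ∃ C₁ : ℝ, 0 < C₁ ∧
      ∀ x ∈ Metric.ball (0 : EuclideanSpace ℝ (Fin n)) 1,
        C₁ * (1 - ‖x‖) ^ (-(2 * s)) ≤
          ∫ y in (Metric.ball (0 : EuclideanSpace ℝ (Fin n)) 1)ᶜ,
            dist x y ^ (-((n : ℝ) + 2 * s)) := by
  have : NeZero n := ⟨by omega⟩
  have hr : (finrank ℝ (EuclideanSpace ℝ (Fin n)) : ℝ) < n + 2 * s := by
    rw [finrank_euclideanSpace_fin]
    linarith [hs.1]
  refine ⟨3 ^ (-((n : ℝ) + 2 * s)) * volume.real (ball (0 : EuclideanSpace ℝ (Fin n)) 1),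
    mul_pos (by positivity)
      (ENNReal.toReal_pos (measure_ball_pos _ _ one_pos).ne' measure_ball_lt_top.ne), ?_⟩
  intro x hx
  convert le_integral_compl_ball_dist_rpow_neg volume hr (mem_ball_zero_iff.1 hx) using 3
  rw [finrank_euclideanSpace_fin]
  ring
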